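/- arXiv:1403.2254 — 5 statements merged into one kernel-verified Lean document; each statement's English description precedes it below -/
import Mathlib

section
/- Let Q be a loop. Then Q is a semiautomorphic IP loop if and only if Q is a flexible IP loop such that every inner mapping θ of Q preserves inverses, i.e. (x⁻¹)θ = (xθ)⁻¹ for all x ∈ Q. -/
/-- A loop structure on a type with multiplication and identity element:
the equations `a * x = b` and `y * a = b` have unique solutions, and `1` is a
two-sided identity. -/
structure IsLoop (Q : Type*) [Mul Q] [One Q] : Prop where
  exUnique_left : ∀ a b : Q, ∃! x : Q, a * x = b
  exUnique_right : ∀ a b : Q, ∃! y : Q, y * a = b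
  one_mul : ∀ x : Q, 1 * x = x
  mul_one : ∀ x : Q, x * 1 = x

/-- Flexibility: `(xy)x = x(yx)`. -/
def Flex (Q : Type*) [Mul Q] : Prop := ∀ x y : Q, (x * y) * x = x * (y * x)

/-- The inverse property: `x⁻¹(xy) = y` and `(yx)x⁻¹ = y`. -/
def IsIP (Q : Type*) [Mul Q] [Inv Q] : Prop :=
  ∀ x y : Q, x⁻¹ * (x * y) = y ∧ (y * x) * x⁻¹ = y

/-- A semiautomorphism: `1θ = 1` and `(x·y·x)θ = xθ·yθ·xθ`. -/
def IsSemiautomorphism (Q : Type*) [Mul Q] [One Q] (θ : Q → Q) : Prop :=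
  θ 1 = 1 ∧ ∀ x y : Q, θ ((x * y) * x) = (θ x * θ y) * θ x

/-- The set of left and right translations, as permutations. -/
def translations (Q : Type*) [Mul Q] : Set (Equiv.Perm Q) :=
  {π : Equiv.Perm Q | (∃ x : Q, ∀ y : Q, π y = x * y) ∨ (∃ x : Q, ∀ y : Q, π y = y * x)}

/-- An inner mapping: an element of the multiplication group (the group generated by
all translations) fixing `1`. -/
def IsInnerMapping (Q : Type*) [Mul Q] [One Q] (θ : Equiv.Perm Q) : Prop :=
  θ ∈ Subgroup.closure (translations Q) ∧ θ 1 = 1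

/-- A semiautomorphic IP loop: a flexible IP loop in which every inner mapping is a
semiautomorphism. -/
structure IsSAIPLoop (Q : Type*) [Mul Q] [One Q] [Inv Q] : Prop where
  toIsLoop : IsLoop Q
  flexible : Flex Q
  ip : IsIP Q
  inner_semi : ∀ θ : Equiv.Perm Q, IsInnerMapping Q θ → IsSemiautomorphism Q ⇑θ

/-- The commutant `C(Q)`. -/
def commutant (Q : Type*) [Mul Q] : Set Q := {a : Q | ∀ x : Q, a * x = x * a}

/-- The center `Z(Q)`: elements commuting with every element and associating with
every pair of elements. -/
def loopCenter (Q : Type*) [Mul Q] : Set Q :=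
  {a : Q | (∀ x : Q, a * x = x * a) ∧ (∀ x y : Q, a * (x * y) = (a * x) * y) ∧
    (∀ x y : Q, x * (a * y) = (x * a) * y) ∧ (∀ x y : Q, x * (y * a) = (x * y) * a)}

/-!
Applying a semiautomorphism `θ` to `x x⁻¹ x = x` and cancelling gives `θx · θx⁻¹ = 1`.
Conversely, for an inner mapping `θ` and `x ∈ Q` the map `ψ : z ↦ θ(zx) · (θx)⁻¹` is again an
inner mapping. Since IP loops have the antiautomorphic inverse property and `ψ` preserves
inverses, `ψ(xy) = ψ((y⁻¹x⁻¹)⁻¹) = (θy⁻¹ · (θx)⁻¹)⁻¹ = θx · θy`, that is,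
`θ((xy)x) = (θx · θy) · θx`.
-/

lemma IsIP.mul_inv_rev {Q : Type*} [Mul Q] [Inv Q] (hip : IsIP Q) (x y : Q) :
    (x * y)⁻¹ = y⁻¹ * x⁻¹ := by
  have h : (x * y)⁻¹ * x = y⁻¹ := by simpa only [(hip y x).2] using (hip (x * y) y⁻¹).1
  simpa only [h] using ((hip x (x * y)⁻¹).2).symm

section

variable {Q : Type*} [Mul Q] [One Q]

namespace IsLoop

lemma mul_left_cancel (hQ : IsLoop Q) {a b c : Q} (h : a * b = a * c) : b = c :=
  (hQ.exUnique_left a (a * b)).unique rfl h.symm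

lemma mul_right_cancel (hQ : IsLoop Q) {a b c : Q} (h : b * a = c * a) : b = c :=
  (hQ.exUnique_right a (b * a)).unique rfl h.symm

end IsLoop

variable [Inv Q]

namespace IsIP

lemma mul_inv_self (hQ : IsLoop Q) (hip : IsIP Q) (x : Q) : x * x⁻¹ = 1 := by
  simpa only [hQ.one_mul] using (hip x 1).2

lemma inv_mul_self (hQ : IsLoop Q) (hip : IsIP Q) (x : Q) : x⁻¹ * x = 1 := by
  simpa only [hQ.mul_one] using (hip x 1).1

lemma inv_inv (hQ : IsLoop Q) (hip : IsIP Q) (x : Q) : x⁻¹⁻¹ = x :=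
  hQ.mul_left_cancel ((hip.mul_inv_self hQ x⁻¹).trans (hip.inv_mul_self hQ x).symm)

lemma mul_inv_mul_cancel (hQ : IsLoop Q) (hip : IsIP Q) (x y : Q) : (y * x⁻¹) * x = y := by
  simpa only [hip.inv_inv hQ] using (hip x⁻¹ y).2

def rightMulPerm (hQ : IsLoop Q) (hip : IsIP Q) (a : Q) : Equiv.Perm Q where
  toFun z := z * a
  invFun z := z * a⁻¹
  left_inv z := (hip a z).2
  right_inv z := hip.mul_inv_mul_cancel hQ a z

lemma rightMulPerm_mem_closure (hQ : IsLoop Q) (hip : IsIP Q) (a : Q) :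
    hip.rightMulPerm hQ a ∈ Subgroup.closure (translations Q) :=
  Subgroup.subset_closure (Or.inr ⟨a, fun _ => rfl⟩)

lemma isInnerMapping_conj_rightMulPerm (hQ : IsLoop Q) (hip : IsIP Q) {θ : Equiv.Perm Q}
    (hθ : IsInnerMapping Q θ) (x : Q) :
    IsInnerMapping Q ((hip.rightMulPerm hQ (θ x))⁻¹ * θ * hip.rightMulPerm hQ x) := by
  refine ⟨mul_mem (mul_mem (inv_mem (hip.rightMulPerm_mem_closure hQ _)) hθ.1)
    (hip.rightMulPerm_mem_closure hQ x), ?_⟩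
  change θ (1 * x) * (θ x)⁻¹ = 1
  rw [hQ.one_mul, hip.mul_inv_self hQ]

lemma map_inv_of_isSemiautomorphism (hQ : IsLoop Q) (hip : IsIP Q) {θ : Q → Q}
    (hθ : IsSemiautomorphism Q θ) (x : Q) : θ x⁻¹ = (θ x)⁻¹ := by
  have hx : θ x = (θ x * θ x⁻¹) * θ x := by
    simpa only [hip.mul_inv_self hQ, hQ.one_mul] using hθ.2 x x⁻¹
  have h : θ x * θ x⁻¹ = 1 := hQ.mul_right_cancel (hx.symm.trans (hQ.one_mul _).symm)
  exact hQ.mul_left_cancel (h.trans (hip.mul_inv_self hQ _).symm)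

lemma isSemiautomorphism_of_forall_map_inv (hQ : IsLoop Q) (hip : IsIP Q)
    (hinv : ∀ θ : Equiv.Perm Q, IsInnerMapping Q θ → ∀ x : Q, θ x⁻¹ = (θ x)⁻¹)
    {θ : Equiv.Perm Q} (hθ : IsInnerMapping Q θ) : IsSemiautomorphism Q θ := by
  refine ⟨hθ.2, fun x y => ?_⟩
  set ψ := (hip.rightMulPerm hQ (θ x))⁻¹ * θ * hip.rightMulPerm hQ x
  have hψ : ∀ z, ψ z = θ (z * x) * (θ x)⁻¹ := fun _ => rfl
  have hψxy : ψ (x * y) = θ x * θ y := calc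
    ψ (x * y) = (ψ (y⁻¹ * x⁻¹))⁻¹ := by
      rw [← hinv ψ (hip.isInnerMapping_conj_rightMulPerm hQ hθ x), ← hip.mul_inv_rev,
        hip.inv_inv hQ]
    _ = ((θ y)⁻¹ * (θ x)⁻¹)⁻¹ := by
      rw [hψ, hip.mul_inv_mul_cancel hQ, hinv θ hθ]
    _ = θ x * θ y := by
      rw [hip.mul_inv_rev, hip.inv_inv hQ, hip.inv_inv hQ]
  calc θ ((x * y) * x) = ψ (x * y) * θ x := (hip.mul_inv_mul_cancel hQ _ _).symm
    _ = (θ x * θ y) * θ x := by rw [hψxy]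

end IsIP

end

/-- A loop `Q` is a semiautomorphic IP loop iff it is a flexible IP loop
in which every inner mapping preserves inverses. -/
theorem stmt0 (Q : Type*) [Mul Q] [One Q] [Inv Q] (hQ : IsLoop Q) :
    IsSAIPLoop Q ↔
      (Flex Q ∧ IsIP Q ∧
        ∀ θ : Equiv.Perm Q, IsInnerMapping Q θ → ∀ x : Q, θ x⁻¹ = (θ x)⁻¹) := by
  constructor
  · intro h
    exact ⟨h.flexible, h.ip, fun θ hθ =>
      h.ip.map_inv_of_isSemiautomorphism hQ (h.inner_semi θ hθ)⟩
  · rintro ⟨hflex, hip, hinv⟩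
    exact ⟨hQ, hflex, hip, fun θ hθ => hip.isSemiautomorphism_of_forall_map_inv hQ hinv hθ⟩
end

section
/- Let Q be an IP loop that is flexible and satisfies L_x P_y R_x = P_{yx} and R_x P_y L_x = P_{xy} for all x,y ∈ Q, where P_x = L_x R_x. Then every inner mapping of Q is a semiautomorphism. -/
/-!
Call a permutation `φ` of `Q` *`P`-twisting* if `P_{yφ} = φ' P_y φ` for all `y` and some
permutation `φ'` (maps composed left to right). These permutations form a subgroup, and the
two identities `L_x P_y R_x = P_{yx}`, `R_x P_y L_x = P_{xy}` say precisely that `R_x` and `L_x`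
are `P`-twisting, with companions `L_x` and `R_x`. Hence so is every element of `Mlt(Q)`. If
moreover `1φ = 1`, then `y = 1` gives `P_1 = φ' φ`, i.e. `φ' = φ⁻¹`, and the twisting identity
becomes `(x y x)φ = xφ · yφ · xφ`.
-/

open Equiv

namespace IsLoop

variable {Q : Type*} [Mul Q] [One Q]

theorem bijective_mul_left (hQ : IsLoop Q) (a : Q) : Function.Bijective (a * ·) :=
  ⟨fun _ y h => (hQ.exUnique_left a (a * y)).unique h rfl,
    fun b => (hQ.exUnique_left a b).exists⟩

theorem bijective_mul_right (hQ : IsLoop Q) (a : Q) : Function.Bijective (· * a) :=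
  ⟨fun _ y h => (hQ.exUnique_right a (y * a)).unique h rfl,
    fun b => (hQ.exUnique_right a b).exists⟩

noncomputable def mulLeftPerm (hQ : IsLoop Q) (a : Q) : Perm Q :=
  Equiv.ofBijective _ (hQ.bijective_mul_left a)

noncomputable def mulRightPerm (hQ : IsLoop Q) (a : Q) : Perm Q :=
  Equiv.ofBijective _ (hQ.bijective_mul_right a)

@[simp]
theorem mulLeftPerm_apply (hQ : IsLoop Q) (a x : Q) : hQ.mulLeftPerm a x = a * x := rfl

@[simp]
theorem mulRightPerm_apply (hQ : IsLoop Q) (a x : Q) : hQ.mulRightPerm a x = x * a := rfl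

end IsLoop

def pTwistingSubgroup (Q : Type*) [Mul Q] : Subgroup (Perm Q) where
  carrier := {φ | ∃ φ' : Perm Q, ∀ y z, φ y * z * φ y = φ (y * φ' z * y)}
  mul_mem' := by
    rintro φ ψ ⟨φ', hφ⟩ ⟨ψ', hψ⟩
    exact ⟨ψ' * φ', fun y z => by simp only [Perm.mul_apply, hφ (ψ y) z, hψ y (φ' z)]⟩
  one_mem' := ⟨1, fun _ _ => rfl⟩
  inv_mem' := by
    rintro φ ⟨φ', hφ⟩
    refine ⟨φ'⁻¹, fun y z => ?_⟩
    have h := hφ (φ⁻¹ y) (φ'⁻¹ z)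
    simp only [Perm.coe_inv, Equiv.apply_symm_apply] at h ⊢
    rw [h, Equiv.symm_apply_apply]

section

variable {Q : Type*} [Mul Q] [One Q]

theorem translations_subset_pTwistingSubgroup (hQ : IsLoop Q)
    (hRIF1 : ∀ x y z : Q, ((y * (x * z)) * y) * x = ((y * x) * z) * (y * x))
    (hRIF2 : ∀ x y z : Q, x * ((y * (z * x)) * y) = ((x * y) * z) * (x * y)) :
    translations Q ⊆ pTwistingSubgroup Q := by
  rintro π (⟨x, hπ⟩ | ⟨x, hπ⟩)
  · refine ⟨hQ.mulRightPerm x, fun y z => ?_⟩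
    simpa only [hπ, IsLoop.mulRightPerm_apply] using (hRIF2 x y z).symm
  · refine ⟨hQ.mulLeftPerm x, fun y z => ?_⟩
    simpa only [hπ, IsLoop.mulLeftPerm_apply] using (hRIF1 x y z).symm

theorem isSemiautomorphism_of_mem_pTwistingSubgroup (hQ : IsLoop Q) {φ : Perm Q}
    (hφ : φ ∈ pTwistingSubgroup Q) (h1 : φ 1 = 1) : IsSemiautomorphism Q φ := by
  obtain ⟨φ', hφ'⟩ := hφ
  have h_right_inv : ∀ z, φ (φ' z) = z := fun z => by
    simpa only [h1, hQ.one_mul, hQ.mul_one] using (hφ' 1 z).symm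
  have h_left_inv : ∀ y, φ' (φ y) = y := fun y => φ.injective (h_right_inv (φ y))
  refine ⟨h1, fun x y => ?_⟩
  rw [hφ' x (φ y), h_left_inv]

end

theorem stmt1_general (Q : Type*) [Mul Q] [One Q] (hQ : IsLoop Q)
    (hRIF1 : ∀ x y z : Q, ((y * (x * z)) * y) * x = ((y * x) * z) * (y * x))
    (hRIF2 : ∀ x y z : Q, x * ((y * (z * x)) * y) = ((x * y) * z) * (x * y)) :
    ∀ θ : Equiv.Perm Q, IsInnerMapping Q θ → IsSemiautomorphism Q ⇑θ := by
  rintro θ ⟨hθ, h1⟩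
  have hle : Subgroup.closure (translations Q) ≤ pTwistingSubgroup Q :=
    (Subgroup.closure_le _).2 (translations_subset_pTwistingSubgroup hQ hRIF1 hRIF2)
  exact isSemiautomorphism_of_mem_pTwistingSubgroup hQ (hle hθ) h1

/-- If `Q` is a flexible IP loop satisfying `L_x P_y R_x = P_{yx}` and
`R_x P_y L_x = P_{xy}` (maps composed left to right, `P_x = L_x R_x`), then every
inner mapping of `Q` is a semiautomorphism. -/
theorem stmt1 (Q : Type*) [Mul Q] [One Q] [Inv Q] (hQ : IsLoop Q) (hIP : IsIP Q)
    (hflex : Flex Q)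
    (hRIF1 : ∀ x y z : Q, ((y * (x * z)) * y) * x = ((y * x) * z) * (y * x))
    (hRIF2 : ∀ x y z : Q, x * ((y * (z * x)) * y) = ((x * y) * z) * (x * y)) :
    ∀ θ : Equiv.Perm Q, IsInnerMapping Q θ → IsSemiautomorphism Q ⇑θ :=
  stmt1_general Q hQ hRIF1 hRIF2
end

section
/- Let Q be an IP loop and let * : Q → Q be a bijection such that gg* ∈ Z(Q) for every g ∈ Q. Then g*g = gg* ∈ Z(Q) for every g ∈ Q. -/
theorem mul_comm_of_mul_mem_loopCenter {Q : Type*} [Mul Q] [Inv Q]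
    (hLIP : ∀ x y : Q, x⁻¹ * (x * y) = y) {g h : Q} (hc : g * h ∈ loopCenter Q) :
    h * g = g * h := by
  obtain ⟨hcomm, -, hmid, -⟩ := hc
  calc h * g = (g⁻¹ * (g * h)) * g := by rw [hLIP]
    _ = g⁻¹ * ((g * h) * g) := (hmid _ _).symm
    _ = g⁻¹ * (g * (g * h)) := by rw [hcomm g]
    _ = g * h := hLIP _ _

theorem stmt11_general (Q : Type*) [Mul Q] [Inv Q] (hIP : IsIP Q)
    (st : Q → Q)
    (hZ : ∀ g : Q, g * st g ∈ loopCenter Q) :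
    ∀ g : Q, st g * g = g * st g ∧ st g * g ∈ loopCenter Q := by
  intro g
  have hcomm : st g * g = g * st g :=
    mul_comm_of_mul_mem_loopCenter (fun x y => (hIP x y).1) (hZ g)
  exact ⟨hcomm, hcomm ▸ hZ g⟩

/-- If `Q` is an IP loop and `* : Q → Q` is a bijection with `gg* ∈ Z(Q)`
for all `g`, then `g*g = gg* ∈ Z(Q)` for all `g`. -/
theorem stmt11 (Q : Type*) [Mul Q] [One Q] [Inv Q] (hQ : IsLoop Q) (hIP : IsIP Q)
    (st : Q → Q) (hbij : Function.Bijective st)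
    (hZ : ∀ g : Q, g * st g ∈ loopCenter Q) :
    ∀ g : Q, st g * g = g * st g ∧ st g * g ∈ loopCenter Q :=
  stmt11_general Q hIP st hZ
end

section
/- Let Q be a semiautomorphic IP loop, g₀ ∈ Z(Q), and * an involutory antiautomorphism of Q such that g₀* = g₀ and gg* ∈ Z(Q) for every g ∈ Q. For an indeterminate t, define multiplication ∘ on the disjoint union Q ∪ Qt by: g∘h = gh, g∘(ht) = (hg)t, (gt)∘h = (gh*)t, and (gt)∘(ht) = g₀ h* g. Then (Q ∪ Qt, ∘) is a semiautomorphic IP loop. -/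
/-!
The double `D = Q ∪ Qt` is checked by cases to be a flexible IP loop. Since `L_{πb}⁻¹ π L_b` is a
cocycle in `π`, the inner mapping group of `D` is generated by these maps for `π` a translation
of `D`, and it remains to show that they are semiautomorphisms. In each of the eight cases (left
or right translation by an element of `Q` or of `Qt`, base point in `Q` or in `Qt`) such a map acts
on `Q` by an inner mapping `α` of `Q` and on `Qt` by an element `w` of the multiplication group of
`Q` with `N(w 1) = 1`, where `N(g) = g g*`, possibly after first applying `*` on both halves, which
is itself a semiautomorphism of `D`. A map of this shape is a semiautomorphism: `α` and
`L_{w 1}⁻¹ w` are inner mappings of `Q`, hence semiautomorphisms commuting with multiplication by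
central elements such as `N(g)` and `g₀`, and the identity `(cp)(qc⁻¹)(cp) = c(pqp)` of
semiautomorphic IP loops absorbs the left factor `c = w 1`.
-/

structure IsFlexIPLoop (R : Type*) [Mul R] [One R] [Inv R] : Prop where
  one_mul : ∀ x : R, 1 * x = x
  mul_one : ∀ x : R, x * 1 = x
  flex : ∀ x y : R, (x * y) * x = x * (y * x)
  inv_mul_cancel_left : ∀ x y : R, x⁻¹ * (x * y) = y
  mul_inv_cancel_right : ∀ x y : R, (x * y) * y⁻¹ = x

namespace IsFlexIPLoop

variable {R : Type*} [Mul R] [One R] [Inv R] (h : IsFlexIPLoop R)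
include h

theorem inv_mul_cancel (x : R) : x⁻¹ * x = 1 := by
  simpa only [h.mul_one] using h.inv_mul_cancel_left x 1

theorem mul_inv_cancel (x : R) : x * x⁻¹ = 1 := by
  simpa only [h.one_mul] using h.mul_inv_cancel_right 1 x

theorem inv_inv (x : R) : x⁻¹⁻¹ = x := by
  simpa only [h.inv_mul_cancel, h.mul_one] using h.inv_mul_cancel_left x⁻¹ x

theorem mul_inv_cancel_left (x y : R) : x * (x⁻¹ * y) = y := by
  simpa only [h.inv_inv] using h.inv_mul_cancel_left x⁻¹ y

theorem inv_mul_cancel_right (x y : R) : (x * y⁻¹) * y = x := by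
  simpa only [h.inv_inv] using h.mul_inv_cancel_right x y⁻¹

theorem mul_left_cancel {a x y : R} (e : a * x = a * y) : x = y := by
  rw [← h.inv_mul_cancel_left a x, e, h.inv_mul_cancel_left]

theorem mul_right_cancel {a x y : R} (e : x * a = y * a) : x = y := by
  rw [← h.mul_inv_cancel_right x a, e, h.mul_inv_cancel_right]

theorem eq_inv_of_mul_eq_one_right {a b : R} (e : a * b = 1) : b = a⁻¹ := by
  rw [← h.inv_mul_cancel_left a b, e, h.mul_one]

theorem mul_inv_rev (a b : R) : (a * b)⁻¹ = b⁻¹ * a⁻¹ := by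
  have hb : b * (a * b)⁻¹ = a⁻¹ := by
    simpa only [h.inv_mul_cancel_left] using h.mul_inv_cancel_right a⁻¹ (a * b)
  rw [← hb, h.inv_mul_cancel_left]

theorem isLoop : IsLoop R where
  exUnique_left a b := ⟨a⁻¹ * b, h.mul_inv_cancel_left a b, fun y hy => by
    rw [← hy, h.inv_mul_cancel_left]⟩
  exUnique_right a b := ⟨b * a⁻¹, h.inv_mul_cancel_right b a, fun y hy => by
    rw [← hy, h.mul_inv_cancel_right]⟩
  one_mul := h.one_mul
  mul_one := h.mul_one

theorem isSAIPLoop (hinner : ∀ θ : Equiv.Perm R, IsInnerMapping R θ → IsSemiautomorphism R θ) :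
    IsSAIPLoop R :=
  ⟨h.isLoop, h.flex, fun x y => ⟨h.inv_mul_cancel_left x y, h.mul_inv_cancel_right y x⟩, hinner⟩

end IsFlexIPLoop

section LoopCenter

variable {R : Type*} [Mul R] {z : R} (hz : z ∈ loopCenter R)
include hz

theorem center_comm (x : R) : z * x = x * z := hz.1 x

theorem center_mul_assoc (x y : R) : z * x * y = z * (x * y) := (hz.2.1 x y).symm

theorem mul_center_mul (x y : R) : x * (z * y) = z * (x * y) := by
  rw [hz.2.2.1 x y, ← center_comm hz x, center_mul_assoc hz]

theorem mul_center_mul_right (x y : R) : x * z * y = z * (x * y) := by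
  rw [← center_comm hz x, center_mul_assoc hz]

theorem mul_mul_center (x y : R) : x * (y * z) = z * (x * y) := by
  rw [hz.2.2.2 x y, ← center_comm hz (x * y)]

end LoopCenter

namespace IsFlexIPLoop

variable {R : Type*} [Mul R] [One R] [Inv R] (h : IsFlexIPLoop R)
include h

variable {z : R} (hz : z ∈ loopCenter R)
include hz

theorem inv_mem_loopCenter : z⁻¹ ∈ loopCenter R := by
  have comm : ∀ x : R, z⁻¹ * x = x * z⁻¹ := fun x => h.mul_left_cancel (a := z) <| by
    rw [h.mul_inv_cancel_left, ← center_mul_assoc hz, center_comm hz, h.mul_inv_cancel_right]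
  refine ⟨comm, fun x y => ?_, fun x y => ?_, fun x y => ?_⟩ <;> apply h.mul_left_cancel (a := z)
  · rw [h.mul_inv_cancel_left, ← center_mul_assoc hz, h.mul_inv_cancel_left]
  · rw [← mul_center_mul hz x, h.mul_inv_cancel_left, ← center_mul_assoc hz,
      ← mul_center_mul hz x z⁻¹, h.mul_inv_cancel, h.mul_one]
  · rw [← mul_center_mul hz x, ← mul_center_mul hz y, ← mul_center_mul hz (x * y),
      h.mul_inv_cancel, h.mul_one, h.mul_one]

end IsFlexIPLoop

def semiautomorphismGroup (R : Type*) [Mul R] [One R] : Subgroup (Equiv.Perm R) where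
  carrier := {θ | IsSemiautomorphism R θ}
  one_mem' := ⟨rfl, fun _ _ => rfl⟩
  mul_mem' := by
    rintro θ ψ ⟨hθ1, hθ⟩ ⟨hψ1, hψ⟩
    exact ⟨by simp only [Equiv.Perm.mul_apply, hψ1, hθ1],
      fun x y => by simp only [Equiv.Perm.mul_apply, hψ, hθ]⟩
  inv_mem' := by
    rintro θ ⟨hθ1, hθ⟩
    refine ⟨θ.injective ?_, fun x y => θ.injective ?_⟩
    · simp only [Equiv.Perm.coe_inv, Equiv.apply_symm_apply, hθ1]
    · simp only [Equiv.Perm.coe_inv, Equiv.apply_symm_apply, hθ]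

theorem mem_semiautomorphismGroup {R : Type*} [Mul R] [One R] {θ : Equiv.Perm R} :
    θ ∈ semiautomorphismGroup R ↔ IsSemiautomorphism R θ :=
  Iff.rfl

theorem IsSemiautomorphism.comp {R : Type*} [Mul R] [One R] {f g : R → R}
    (hf : IsSemiautomorphism R f) (hg : IsSemiautomorphism R g) :
    IsSemiautomorphism R (f ∘ g) :=
  ⟨by simp only [Function.comp_apply, hg.1, hf.1],
    fun x y => by simp only [Function.comp_apply, hg.2, hf.2]⟩

theorem IsSemiautomorphism.map_inv {R : Type*} [Mul R] [One R] [Inv R] (h : IsFlexIPLoop R)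
    {σ : R → R} (hσ : IsSemiautomorphism R σ) (x : R) : σ x⁻¹ = (σ x)⁻¹ := by
  have hx : σ x * σ x⁻¹ * σ x = σ x * (σ x)⁻¹ * σ x := by
    rw [← hσ.2, h.mul_inv_cancel, h.mul_inv_cancel, h.one_mul, h.one_mul]
  exact h.mul_left_cancel (h.mul_right_cancel hx)

abbrev multGroup (R : Type*) [Mul R] : Subgroup (Equiv.Perm R) :=
  Subgroup.closure (translations R)

theorem map_center_mul {R : Type*} [Mul R] {π : Equiv.Perm R} (hπ : π ∈ multGroup R) {z : R}
    (hz : z ∈ loopCenter R) (u : R) : π (z * u) = z * π u := by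
  induction hπ using Subgroup.closure_induction generalizing u with
  | mem π hπ =>
    rcases hπ with ⟨a, hπ⟩ | ⟨a, hπ⟩
    · rw [hπ, hπ, mul_center_mul hz]
    · rw [hπ, hπ, center_mul_assoc hz]
  | one => rfl
  | mul π ψ _ _ hπ hψ => simp only [Equiv.Perm.mul_apply, hψ, hπ]
  | inv π _ hπ =>
    apply π.injective
    simp only [Equiv.Perm.coe_inv, Equiv.apply_symm_apply, hπ]

namespace IsFlexIPLoop

variable {R : Type*} [Mul R] [One R] [Inv R] (h : IsFlexIPLoop R)

def leftMul (a : R) : Equiv.Perm R :=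
  ⟨(a * ·), (a⁻¹ * ·), h.inv_mul_cancel_left a, h.mul_inv_cancel_left a⟩

def rightMul (a : R) : Equiv.Perm R :=
  ⟨(· * a), (· * a⁻¹), (h.mul_inv_cancel_right · a), (h.inv_mul_cancel_right · a)⟩

@[simp] theorem leftMul_apply (a y : R) : h.leftMul a y = a * y := rfl

@[simp] theorem rightMul_apply (a y : R) : h.rightMul a y = y * a := rfl

theorem leftMul_mem (a : R) : h.leftMul a ∈ multGroup R :=
  Subgroup.subset_closure (Or.inl ⟨a, fun _ => rfl⟩)

theorem rightMul_mem (a : R) : h.rightMul a ∈ multGroup R :=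
  Subgroup.subset_closure (Or.inr ⟨a, fun _ => rfl⟩)

theorem leftMul_one : h.leftMul 1 = 1 := Equiv.ext h.one_mul

def innerAt (π : Equiv.Perm R) (b : R) : Equiv.Perm R :=
  (h.leftMul (π b))⁻¹ * π * h.leftMul b

theorem innerAt_apply (π : Equiv.Perm R) (b y : R) : h.innerAt π b y = (π b)⁻¹ * π (b * y) :=
  rfl

theorem innerAt_one (b : R) : h.innerAt 1 b = 1 := by
  simp only [innerAt, Equiv.Perm.one_apply]
  group

theorem innerAt_mul (π ψ : Equiv.Perm R) (b : R) :
    h.innerAt (π * ψ) b = h.innerAt π (ψ b) * h.innerAt ψ b := by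
  simp only [innerAt, Equiv.Perm.mul_apply]
  group

theorem innerAt_inv (π : Equiv.Perm R) (b : R) :
    h.innerAt π⁻¹ b = (h.innerAt π (π⁻¹ b))⁻¹ := by
  simp only [innerAt, Equiv.Perm.coe_inv, Equiv.apply_symm_apply]
  group

theorem innerAt_of_map_one {π : Equiv.Perm R} (hπ : π 1 = 1) : h.innerAt π 1 = π := by
  simp only [innerAt, hπ, leftMul_one]
  group

theorem innerAt_eq_iff {π : Equiv.Perm R} {b y z : R} :
    h.innerAt π b y = z ↔ π (b * y) = π b * z := by
  rw [h.innerAt_apply]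
  constructor
  · rintro rfl; rw [h.mul_inv_cancel_left]
  · intro hz; rw [hz, h.inv_mul_cancel_left]

/-- Since `innerAt` is a cocycle (`innerAt_mul`), the maps `innerAt π b` with `π` a translation
generate the inner mapping group. -/
theorem isSemiautomorphism_of_isInnerMapping
    (hgen : ∀ π ∈ translations R, ∀ b : R, IsSemiautomorphism R (h.innerAt π b))
    {θ : Equiv.Perm R} (hθ : IsInnerMapping R θ) : IsSemiautomorphism R θ := by
  have key : ∀ ψ ∈ multGroup R, ∀ b : R, h.innerAt ψ b ∈ semiautomorphismGroup R := by
    intro ψ hψ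
    induction hψ using Subgroup.closure_induction with
    | mem π hπ => exact hgen π hπ
    | one => intro b; rw [innerAt_one]; exact one_mem _
    | mul π ψ _ _ hπ hψ => intro b; rw [innerAt_mul]; exact mul_mem (hπ _) (hψ _)
    | inv π _ hπ => intro b; rw [innerAt_inv]; exact inv_mem (hπ _)
  simpa only [h.innerAt_of_map_one hθ.2, mem_semiautomorphismGroup] using key θ hθ.1 1

end IsFlexIPLoop

namespace IsSAIPLoop

variable {Q : Type*} [Mul Q] [One Q] [Inv Q] (hQ : IsSAIPLoop Q)
include hQ

theorem isFlexIPLoop : IsFlexIPLoop Q :=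
  ⟨hQ.toIsLoop.one_mul, hQ.toIsLoop.mul_one, hQ.flexible,
    fun x y => (hQ.ip x y).1, fun x y => (hQ.ip y x).2⟩

theorem isSemiautomorphism {π : Equiv.Perm Q} (hπ : π ∈ multGroup Q) (h1 : π 1 = 1) :
    IsSemiautomorphism Q π :=
  hQ.inner_semi π ⟨hπ, h1⟩

theorem mul_sandwich (c p q : Q) : c * p * (q * c⁻¹) * (c * p) = c * (p * q * p) := by
  have h := hQ.isFlexIPLoop
  set φ := h.innerAt (h.leftMul c) p
  have hφ1 : φ 1 = 1 := by
    rw [h.innerAt_apply, h.mul_one]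
    exact h.inv_mul_cancel _
  have hφ : IsSemiautomorphism Q φ := hQ.isSemiautomorphism
    (mul_mem (mul_mem (inv_mem (h.leftMul_mem _)) (h.leftMul_mem _)) (h.leftMul_mem _)) hφ1
  -- the inner mapping `φ = L_{cp}⁻¹ L_c L_p` preserves inverses, which computes `φ (q * p)`
  have hqp : φ (q * p) = q * c⁻¹ * (c * p) := by
    have hinv : φ (q * p)⁻¹ = (c * p)⁻¹ * (c * q⁻¹) := by
      rw [h.mul_inv_rev, h.innerAt_apply, h.leftMul_apply, h.leftMul_apply, h.mul_inv_cancel_left]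
    rw [← h.inv_inv (φ (q * p)), ← hφ.map_inv h, hinv, h.mul_inv_rev, h.mul_inv_rev, h.inv_inv,
      h.inv_inv]
  calc c * p * (q * c⁻¹) * (c * p) = c * p * φ (q * p) := by rw [h.flex, hqp]
    _ = c * (p * (q * p)) := by
      rw [h.innerAt_apply, h.leftMul_apply, h.leftMul_apply, h.mul_inv_cancel_left]
    _ = c * (p * q * p) := by rw [h.flex]

end IsSAIPLoop

def starNorm {Q : Type*} [Mul Q] (st : Q → Q) (g : Q) : Q := g * st g

section StarNorm

variable {Q : Type*} [Mul Q] [One Q] [Inv Q] (h : IsFlexIPLoop Q) {st : Q → Q}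
  (hanti : ∀ g k : Q, st (g * k) = st k * st g) (hst2 : ∀ g : Q, st (st g) = g)
  (hN : ∀ g : Q, starNorm st g ∈ loopCenter Q)

section Anti

include h hanti

theorem st_one : st 1 = 1 :=
  h.mul_left_cancel (a := st 1) (by rw [← hanti, h.one_mul, h.mul_one])

theorem st_inv (g : Q) : st g⁻¹ = (st g)⁻¹ :=
  h.eq_inv_of_mul_eq_one_right (by rw [← hanti, h.inv_mul_cancel, st_one h hanti])

theorem starNorm_one : starNorm st 1 = 1 := by
  rw [starNorm, st_one h hanti, h.mul_one]

end Anti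

section Central

include h hN

theorem st_eq_starNorm_mul_inv (g : Q) : st g = starNorm st g * g⁻¹ := by
  rw [center_comm (hN g)]
  exact (h.inv_mul_cancel_left g (st g)).symm

theorem mul_mul_st (x y : Q) : y * x * st x = starNorm st x * y := by
  rw [st_eq_starNorm_mul_inv h hN, mul_center_mul (hN x), h.mul_inv_cancel_right]

theorem mul_st_mul (x y : Q) : y * st x * x = starNorm st x * y := by
  rw [st_eq_starNorm_mul_inv h hN, mul_center_mul (hN x), center_mul_assoc (hN x),
    h.inv_mul_cancel_right]

theorem st_mul_mul (x y : Q) : st x * (x * y) = starNorm st x * y := by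
  rw [st_eq_starNorm_mul_inv h hN, center_mul_assoc (hN x), h.inv_mul_cancel_left]

theorem mul_st_mul_left (x y : Q) : x * (st x * y) = starNorm st x * y := by
  rw [st_eq_starNorm_mul_inv h hN, center_mul_assoc (hN x), mul_center_mul (hN x),
    h.mul_inv_cancel_left]

include hst2 in
theorem starNorm_st (g : Q) : starNorm st (st g) = starNorm st g := by
  rw [starNorm, hst2, st_eq_starNorm_mul_inv h hN, center_mul_assoc (hN g), h.inv_mul_cancel,
    h.mul_one]

include hanti

theorem starNorm_mul (g k : Q) : starNorm st (g * k) = starNorm st g * starNorm st k := by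
  rw [starNorm, hanti, st_eq_starNorm_mul_inv h hN k, st_eq_starNorm_mul_inv h hN g,
    center_mul_assoc (hN k), mul_center_mul (hN g), mul_center_mul (hN k),
    mul_center_mul (hN g), ← h.mul_inv_rev, h.mul_inv_cancel, h.mul_one, center_comm (hN k)]

theorem starNorm_inv (g : Q) : starNorm st g⁻¹ = (starNorm st g)⁻¹ :=
  h.eq_inv_of_mul_eq_one_right (by
    rw [← starNorm_mul h hanti hN, h.mul_inv_cancel, starNorm_one h hanti])

theorem starNorm_map {π : Equiv.Perm Q} (hπ : π ∈ multGroup Q) (u : Q) :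
    starNorm st (π u) = starNorm st (π 1) * starNorm st u := by
  induction hπ using Subgroup.closure_induction generalizing u with
  | mem π hπ =>
    rcases hπ with ⟨a, hπ⟩ | ⟨a, hπ⟩
    · rw [hπ, hπ, h.mul_one, starNorm_mul h hanti hN]
    · rw [hπ, hπ, h.one_mul, starNorm_mul h hanti hN, center_comm (hN u)]
  | one => rw [Equiv.Perm.one_apply, Equiv.Perm.one_apply, starNorm_one h hanti, h.one_mul]
  | mul π ψ _ _ hπ hψ =>
    rw [Equiv.Perm.mul_apply, Equiv.Perm.mul_apply, hπ, hψ, hπ (ψ 1), center_mul_assoc (hN _)]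
  | inv π _ hπ =>
    have hinv : ∀ v, starNorm st (π⁻¹ v) = (starNorm st (π 1))⁻¹ * starNorm st v := by
      intro v
      have hv := hπ (π⁻¹ v)
      rw [show π (π⁻¹ v) = v from π.apply_symm_apply v] at hv
      rw [hv, h.inv_mul_cancel_left]
    rw [hinv, hinv, starNorm_one h hanti, h.mul_one]

end Central

end StarNorm

/-- The Chein-type double `Q ∪ Qt`: `Sum.inl g` is `g` and `Sum.inr g` is `gt`. The type is
indexed by `st` and `g₀` only so that its multiplication can be an instance. -/
def CheinDouble (Q : Type*) (_st : Q → Q) (_g₀ : Q) : Type _ := Q ⊕ Q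

namespace CheinDouble

variable {Q : Type*} (st : Q → Q) (g₀ : Q)

def mul [Mul Q] : Q ⊕ Q → Q ⊕ Q → Q ⊕ Q
  | .inl g, .inl h => .inl (g * h)
  | .inl g, .inr h => .inr (h * g)
  | .inr g, .inl h => .inr (g * st h)
  | .inr g, .inr h => .inl (g₀ * (st h * g))

/-- `(gt)⁻¹ = (g⁻¹)* g₀⁻¹ t` is the solution of `(gt) ∘ (ht) = 1`. -/
def inv [Mul Q] [Inv Q] : Q ⊕ Q → Q ⊕ Q
  | .inl g => .inl g⁻¹
  | .inr g => .inr (st g⁻¹ * g₀⁻¹)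

instance [Mul Q] : Mul (CheinDouble Q st g₀) := ⟨mul st g₀⟩

instance [One Q] : One (CheinDouble Q st g₀) := ⟨.inl 1⟩

instance [Mul Q] [Inv Q] : Inv (CheinDouble Q st g₀) := ⟨inv st g₀⟩

def inQ (a : Q) : CheinDouble Q st g₀ := .inl a

def inQt (a : Q) : CheinDouble Q st g₀ := .inr a

local notation "ι" => inQ st g₀
local notation "ιt" => inQt st g₀

@[elab_as_elim, induction_eliminator]
theorem induction {motive : CheinDouble Q st g₀ → Prop} (inQ : ∀ a, motive (ι a))
    (inQt : ∀ a, motive (ιt a)) (X : CheinDouble Q st g₀) : motive X := by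
  rcases X with a | a
  exacts [inQ a, inQt a]

section Mul
variable [Mul Q]
@[simp] theorem inQ_mul_inQ (a b : Q) : ι a * ι b = ι (a * b) := rfl
@[simp] theorem inQ_mul_inQt (a b : Q) : ι a * ιt b = ιt (b * a) := rfl
@[simp] theorem inQt_mul_inQ (a b : Q) : ιt a * ι b = ιt (a * st b) := rfl
@[simp] theorem inQt_mul_inQt (a b : Q) : ιt a * ιt b = ι (g₀ * (st b * a)) := rfl
end Mul

@[simp] theorem one_def [One Q] : (1 : CheinDouble Q st g₀) = ι 1 := rfl
@[simp] theorem inv_inQ [Mul Q] [Inv Q] (a : Q) : (ι a)⁻¹ = ι a⁻¹ := rfl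
@[simp] theorem inv_inQt [Mul Q] [Inv Q] (a : Q) : (ιt a)⁻¹ = ιt (st a⁻¹ * g₀⁻¹) := rfl

def starMap : CheinDouble Q st g₀ → CheinDouble Q st g₀ := Sum.map st st

@[simp] theorem starMap_inQ (a : Q) : starMap st g₀ (ι a) = ι (st a) := rfl
@[simp] theorem starMap_inQt (a : Q) : starMap st g₀ (ιt a) = ιt (st a) := rfl

variable [Mul Q] [One Q] [Inv Q] {st g₀}

section FlexIP

variable (h : IsFlexIPLoop Q) (hg₀ : g₀ ∈ loopCenter Q)
  (hanti : ∀ g k : Q, st (g * k) = st k * st g) (hst2 : ∀ g : Q, st (st g) = g)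
  (hg₀st : st g₀ = g₀) (hN : ∀ g : Q, starNorm st g ∈ loopCenter Q)
include h hg₀ hanti hst2 hg₀st hN

theorem isFlexIPLoop : IsFlexIPLoop (CheinDouble Q st g₀) := by
  have hg₀i := h.inv_mem_loopCenter hg₀
  constructor
  · intro X
    induction X <;> simp only [one_def, inQ_mul_inQ, inQ_mul_inQt, h.one_mul, h.mul_one]
  · intro X
    induction X <;> simp only [one_def, inQ_mul_inQ, inQt_mul_inQ, st_one h hanti, h.mul_one]
  · intro X Y
    induction X <;> induction Y <;>
      simp only [inQ_mul_inQ, inQ_mul_inQt, inQt_mul_inQ, inQt_mul_inQt] <;> congr 1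
    · exact h.flex _ _
    · rw [mul_mul_st h hN, mul_st_mul h hN]
    · rw [st_mul_mul h hN, hanti, mul_st_mul h hN]
    · rw [hanti, hanti, hst2, hg₀st, center_comm hg₀]
  · intro X Y
    induction X <;> induction Y <;>
      simp only [inQ_mul_inQ, inQ_mul_inQt, inQt_mul_inQ, inQt_mul_inQt, inv_inQ, inv_inQt] <;>
      congr 1
    · exact h.inv_mul_cancel_left _ _
    · exact h.mul_inv_cancel_right _ _
    · rw [hanti, hst2, st_inv h hanti, mul_mul_center hg₀i, h.mul_inv_cancel_right,
        h.mul_inv_cancel_left]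
    · rw [hanti, hanti, hst2, hg₀st, st_inv h hanti, mul_center_mul_right hg₀i,
        mul_mul_center hg₀, h.inv_mul_cancel_left, h.inv_mul_cancel_left]
  · intro X Y
    induction X <;> induction Y <;>
      simp only [inQ_mul_inQ, inQ_mul_inQt, inQt_mul_inQ, inQt_mul_inQt, inv_inQ, inv_inQt] <;>
      congr 1
    · exact h.mul_inv_cancel_right _ _
    · rw [hanti, hst2, st_inv h hanti, hg₀st, center_mul_assoc hg₀i, h.mul_inv_cancel_left,
        h.inv_mul_cancel_left]
    · rw [st_inv h hanti, h.mul_inv_cancel_right]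
    · rw [st_inv h hanti, mul_center_mul_right hg₀i, mul_center_mul hg₀, h.inv_mul_cancel_left,
        h.inv_mul_cancel_left]

end FlexIP

variable (hQ : IsSAIPLoop Q) (hg₀ : g₀ ∈ loopCenter Q)
  (hanti : ∀ g k : Q, st (g * k) = st k * st g) (hst2 : ∀ g : Q, st (st g) = g)
  (hg₀st : st g₀ = g₀) (hN : ∀ g : Q, starNorm st g ∈ loopCenter Q)
include hQ hg₀ hanti hN

theorem isSemiautomorphism_of_multGroup {α w : Equiv.Perm Q} (hα : α ∈ multGroup Q)
    (hα1 : α 1 = 1) (hw : w ∈ multGroup Q) (hw1 : starNorm st (w 1) = 1)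
    {θ : CheinDouble Q st g₀ → CheinDouble Q st g₀} (hθ : ∀ u, θ (ι u) = ι (α u))
    (hθt : ∀ u, θ (ιt u) = ιt (w u)) : IsSemiautomorphism (CheinDouble Q st g₀) θ := by
  have h := hQ.isFlexIPLoop
  have hαs := hQ.isSemiautomorphism hα hα1
  -- `w = L_c σ` with `c = w 1` and `σ` an inner mapping, so `mul_sandwich` applies
  set c := w 1
  set σ := h.innerAt w 1
  have hwσ : ∀ u, w u = c * σ u := fun u => by
    rw [h.innerAt_apply, h.one_mul, h.mul_inv_cancel_left]
  have hσs : IsSemiautomorphism Q σ := hQ.isSemiautomorphism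
    (mul_mem (mul_mem (inv_mem (h.leftMul_mem _)) hw) (h.leftMul_mem _))
    (by rw [h.innerAt_apply, h.one_mul]; exact h.inv_mul_cancel c)
  have hαN : ∀ u, starNorm st (α u) = starNorm st u := fun u => by
    rw [starNorm_map h hanti hN hα, hα1, starNorm_one h hanti, h.one_mul]
  have hwN : ∀ u, starNorm st (w u) = starNorm st u := fun u => by
    rw [starNorm_map h hanti hN hw, hw1, h.one_mul]
  refine ⟨by rw [one_def, hθ, hα1], fun X Y => ?_⟩
  induction X with
  | inQ u =>
    induction Y with
    | inQ v => simp only [inQ_mul_inQ, hθ, hαs.2]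
    | inQt v =>
      simp only [inQ_mul_inQt, inQt_mul_inQ, hθ, hθt, mul_mul_st h hN, hαN,
        map_center_mul hw (hN u)]
  | inQt u =>
    induction Y with
    | inQ v =>
      simp only [inQt_mul_inQ, inQt_mul_inQt, hθ, hθt, st_mul_mul h hN, hwN]
      rw [st_eq_starNorm_mul_inv h hN, st_eq_starNorm_mul_inv h hN, hαN,
        map_center_mul hα hg₀, map_center_mul hα (hN u), map_center_mul hα (hN v),
        hαs.map_inv h]
    | inQt v =>
      have key : ∀ a b, a * (g₀ * (st b * a)) = g₀ * (starNorm st b * (a * b⁻¹ * a)) := by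
        intro a b
        rw [st_eq_starNorm_mul_inv h hN, center_mul_assoc (hN b), mul_center_mul hg₀,
          mul_center_mul (hN b), h.flex]
      simp only [inQt_mul_inQt, inQ_mul_inQt, hθt, key, hwN, map_center_mul hw hg₀,
        map_center_mul hw (hN v)]
      rw [hwσ, hwσ, hwσ, h.mul_inv_rev, hQ.mul_sandwich, hσs.2, hσs.map_inv h]

omit hQ in
include hst2 hg₀st in
theorem isSemiautomorphism_starMap (h : IsFlexIPLoop Q) :
    IsSemiautomorphism (CheinDouble Q st g₀) (starMap st g₀) := by
  have hstN : ∀ g, st (starNorm st g) = starNorm st g := fun g => by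
    rw [starNorm, hanti, hst2]
  refine ⟨by rw [one_def, starMap_inQ, st_one h hanti], fun X Y => ?_⟩
  induction X <;> induction Y <;>
    simp only [inQ_mul_inQ, inQ_mul_inQt, inQt_mul_inQ, inQt_mul_inQt, starMap_inQ, starMap_inQt,
      hst2] <;> congr 1
  · rw [hanti, hanti, h.flex]
  · rw [mul_mul_st h hN, mul_st_mul h hN, hanti, hstN, center_comm (hN _)]
  · rw [st_mul_mul h hN, mul_st_mul_left h hN, hanti, hanti, hst2, hstN, hg₀st,
      ← center_comm (hN _), ← center_comm hg₀]
  · rw [hanti, hanti, hanti, hst2, hg₀st, mul_center_mul_right hg₀, mul_center_mul hg₀, h.flex]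

include hst2 hg₀st in
theorem isSemiautomorphism_of_multGroup_comp_st {α w : Equiv.Perm Q} (hα : α ∈ multGroup Q)
    (hα1 : α 1 = 1) (hw : w ∈ multGroup Q) (hw1 : starNorm st (w 1) = 1)
    {θ : CheinDouble Q st g₀ → CheinDouble Q st g₀} (hθ : ∀ u, θ (ι u) = ι (α (st u)))
    (hθt : ∀ u, θ (ιt u) = ιt (w (st u))) : IsSemiautomorphism (CheinDouble Q st g₀) θ := by
  have hstar : ∀ X, starMap st g₀ (starMap st g₀ X) = X := fun X => by
    induction X <;> simp only [starMap_inQ, starMap_inQt, hst2]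
  have hθ' : IsSemiautomorphism _ (θ ∘ starMap st g₀) :=
    isSemiautomorphism_of_multGroup hQ hg₀ hanti hN hα hα1 hw hw1
      (fun u => by simp only [Function.comp_apply, starMap_inQ, hθ, hst2])
      (fun u => by simp only [Function.comp_apply, starMap_inQt, hθt, hst2])
  have hθθ' : θ = (θ ∘ starMap st g₀) ∘ starMap st g₀ := funext fun X => by
    simp only [Function.comp_apply, hstar]
  rw [hθθ']
  exact hθ'.comp (isSemiautomorphism_starMap hg₀ hanti hst2 hg₀st hN hQ.isFlexIPLoop)

section Generators

variable (hD : IsFlexIPLoop (CheinDouble Q st g₀))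
include hD

theorem isSemiautomorphism_innerAt_leftMul_inQ_inQ (x b : Q) :
    IsSemiautomorphism _ (hD.innerAt (hD.leftMul (ι x)) (ι b)) := by
  have h := hQ.isFlexIPLoop
  refine isSemiautomorphism_of_multGroup hQ hg₀ hanti hN
    (α := h.leftMul (x * b)⁻¹ * h.leftMul x * h.leftMul b)
    (w := h.rightMul (x * b)⁻¹ * h.rightMul x * h.rightMul b)
    (by apply_rules [mul_mem, h.leftMul_mem, h.rightMul_mem])
    (by simp [h.mul_one, h.inv_mul_cancel])
    (by apply_rules [mul_mem, h.leftMul_mem, h.rightMul_mem])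
    (by simp [h.one_mul, starNorm_mul h hanti hN, starNorm_inv h hanti hN, center_comm (hN x),
      h.mul_inv_cancel])
    (fun u => hD.innerAt_eq_iff.2 ?_) (fun u => hD.innerAt_eq_iff.2 ?_)
  · simp [h.mul_inv_cancel_left]
  · simp [h.inv_mul_cancel_right]

include hst2 in
theorem isSemiautomorphism_innerAt_leftMul_inQ_inQt (x b : Q) :
    IsSemiautomorphism _ (hD.innerAt (hD.leftMul (ι x)) (ιt b)) := by
  have h := hQ.isFlexIPLoop
  refine isSemiautomorphism_of_multGroup hQ hg₀ hanti hN
    (α := h.rightMul (st (b * x))⁻¹ * h.leftMul (st x) * h.rightMul (st b))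
    (w := h.leftMul (st (b * x))⁻¹ * h.rightMul (st x) * h.leftMul (st b))
    (by apply_rules [mul_mem, h.leftMul_mem, h.rightMul_mem])
    (by simp [h.one_mul, h.mul_inv_cancel, hanti])
    (by apply_rules [mul_mem, h.leftMul_mem, h.rightMul_mem])
    (by simp [h.mul_one, starNorm_mul h hanti hN, starNorm_inv h hanti hN, starNorm_st h hst2 hN,
      center_comm (hN x), h.inv_mul_cancel, hanti])
    (fun u => hD.innerAt_eq_iff.2 ?_) (fun u => hD.innerAt_eq_iff.2 ?_)
  · simp [h.mul_inv_cancel_left, hanti, hst2, st_inv h hanti]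
  · simp [h.inv_mul_cancel_right, hanti, hst2, st_inv h hanti, mul_center_mul hg₀]

include hst2 in
theorem isSemiautomorphism_innerAt_leftMul_inQt_inQ (x b : Q) :
    IsSemiautomorphism _ (hD.innerAt (hD.leftMul (ιt x)) (ι b)) := by
  have h := hQ.isFlexIPLoop
  refine isSemiautomorphism_of_multGroup hQ hg₀ hanti hN
    (α := h.rightMul (b * st x)⁻¹ * h.rightMul (st x) * h.leftMul b)
    (w := h.leftMul (b * st x)⁻¹ * h.leftMul (st x) * h.rightMul b)
    (by apply_rules [mul_mem, h.leftMul_mem, h.rightMul_mem])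
    (by simp [h.mul_one, h.mul_inv_cancel])
    (by apply_rules [mul_mem, h.leftMul_mem, h.rightMul_mem])
    (by simp [h.one_mul, starNorm_mul h hanti hN, starNorm_inv h hanti hN, starNorm_st h hst2 hN,
      center_comm (hN x), h.inv_mul_cancel])
    (fun u => hD.innerAt_eq_iff.2 ?_) (fun u => hD.innerAt_eq_iff.2 ?_)
  · simp [h.mul_inv_cancel_left, hanti, hst2, st_inv h hanti]
  · simp [h.inv_mul_cancel_right, hanti, hst2, st_inv h hanti]

include hst2 hg₀st in
theorem isSemiautomorphism_innerAt_leftMul_inQt_inQt (x b : Q) :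
    IsSemiautomorphism _ (hD.innerAt (hD.leftMul (ιt x)) (ιt b)) := by
  have h := hQ.isFlexIPLoop
  refine isSemiautomorphism_of_multGroup hQ hg₀ hanti hN
    (α := h.leftMul (st b * x)⁻¹ * h.rightMul x * h.rightMul (st b))
    (w := h.rightMul (st b * x)⁻¹ * h.leftMul x * h.leftMul (st b))
    (by apply_rules [mul_mem, h.leftMul_mem, h.rightMul_mem])
    (by simp [h.one_mul, h.inv_mul_cancel])
    (by apply_rules [mul_mem, h.leftMul_mem, h.rightMul_mem])
    (by simp [h.mul_one, starNorm_mul h hanti hN, starNorm_inv h hanti hN, starNorm_st h hst2 hN,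
      center_comm (hN x), h.mul_inv_cancel])
    (fun u => hD.innerAt_eq_iff.2 ?_) (fun u => hD.innerAt_eq_iff.2 ?_)
  · simp [h.mul_inv_cancel_left, hanti, hst2, center_mul_assoc hg₀]
  · simp [h.inv_mul_cancel_right, hanti, hst2, hg₀st, mul_center_mul hg₀, mul_mul_center hg₀]

include hst2 in
theorem isSemiautomorphism_innerAt_rightMul_inQ_inQ (x b : Q) :
    IsSemiautomorphism _ (hD.innerAt (hD.rightMul (ι x)) (ι b)) := by
  have h := hQ.isFlexIPLoop
  refine isSemiautomorphism_of_multGroup hQ hg₀ hanti hN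
    (α := h.leftMul (b * x)⁻¹ * h.rightMul x * h.leftMul b)
    (w := h.rightMul (b * x)⁻¹ * h.rightMul (st x) * h.rightMul b)
    (by apply_rules [mul_mem, h.leftMul_mem, h.rightMul_mem])
    (by simp [h.mul_one, h.inv_mul_cancel])
    (by apply_rules [mul_mem, h.leftMul_mem, h.rightMul_mem])
    (by simp [h.one_mul, starNorm_mul h hanti hN, starNorm_inv h hanti hN, starNorm_st h hst2 hN,
      h.mul_inv_cancel])
    (fun u => hD.innerAt_eq_iff.2 ?_) (fun u => hD.innerAt_eq_iff.2 ?_)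
  · simp [h.mul_inv_cancel_left]
  · simp [h.inv_mul_cancel_right]

include hst2 in
theorem isSemiautomorphism_innerAt_rightMul_inQ_inQt (x b : Q) :
    IsSemiautomorphism _ (hD.innerAt (hD.rightMul (ι x)) (ιt b)) := by
  have h := hQ.isFlexIPLoop
  refine isSemiautomorphism_of_multGroup hQ hg₀ hanti hN
    (α := h.rightMul (x * st b)⁻¹ * h.leftMul x * h.rightMul (st b))
    (w := h.leftMul (x * st b)⁻¹ * h.leftMul (st x) * h.leftMul (st b))
    (by apply_rules [mul_mem, h.leftMul_mem, h.rightMul_mem])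
    (by simp [h.one_mul, h.mul_inv_cancel])
    (by apply_rules [mul_mem, h.leftMul_mem, h.rightMul_mem])
    (by simp [h.mul_one, starNorm_mul h hanti hN, starNorm_inv h hanti hN, starNorm_st h hst2 hN,
      center_comm (hN x), h.inv_mul_cancel])
    (fun u => hD.innerAt_eq_iff.2 ?_) (fun u => hD.innerAt_eq_iff.2 ?_)
  · simp [h.mul_inv_cancel_left, hanti, hst2, st_inv h hanti]
  · simp [h.inv_mul_cancel_right, hanti, hst2, st_inv h hanti, center_mul_assoc hg₀]

include hst2 hg₀st in
theorem isSemiautomorphism_innerAt_rightMul_inQt_inQ (x b : Q) :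
    IsSemiautomorphism _ (hD.innerAt (hD.rightMul (ιt x)) (ι b)) := by
  have h := hQ.isFlexIPLoop
  refine isSemiautomorphism_of_multGroup_comp_st hQ hg₀ hanti hst2 hg₀st hN
    (α := h.rightMul (st b * st x)⁻¹ * h.rightMul (st x) * h.rightMul (st b))
    (w := h.leftMul (st (x * b))⁻¹ * h.rightMul x * h.leftMul (st b))
    (by apply_rules [mul_mem, h.leftMul_mem, h.rightMul_mem])
    (by simp [h.one_mul, h.mul_inv_cancel])
    (by apply_rules [mul_mem, h.leftMul_mem, h.rightMul_mem])
    (by simp [h.mul_one, starNorm_mul h hanti hN, starNorm_inv h hanti hN, starNorm_st h hst2 hN,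
      h.inv_mul_cancel, hanti])
    (fun u => hD.innerAt_eq_iff.2 ?_) (fun u => hD.innerAt_eq_iff.2 ?_)
  · simp [h.mul_inv_cancel_left, hanti, hst2, st_inv h hanti]
  · simp [h.inv_mul_cancel_right, hanti, hst2, st_inv h hanti]

include hst2 hg₀st in
theorem isSemiautomorphism_innerAt_rightMul_inQt_inQt (x b : Q) :
    IsSemiautomorphism _ (hD.innerAt (hD.rightMul (ιt x)) (ιt b)) := by
  have h := hQ.isFlexIPLoop
  refine isSemiautomorphism_of_multGroup_comp_st hQ hg₀ hanti hst2 hg₀st hN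
    (α := h.leftMul (st x * b)⁻¹ * h.leftMul (st x) * h.leftMul b)
    (w := h.rightMul (st x * b)⁻¹ * h.leftMul x * h.rightMul b)
    (by apply_rules [mul_mem, h.leftMul_mem, h.rightMul_mem])
    (by simp [h.mul_one, h.inv_mul_cancel])
    (by apply_rules [mul_mem, h.leftMul_mem, h.rightMul_mem])
    (by simp [h.one_mul, starNorm_mul h hanti hN, starNorm_inv h hanti hN, starNorm_st h hst2 hN,
      center_comm (hN x), h.mul_inv_cancel])
    (fun u => hD.innerAt_eq_iff.2 ?_) (fun u => hD.innerAt_eq_iff.2 ?_)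
  · simp [h.mul_inv_cancel_left, center_mul_assoc hg₀]
  · simp [h.inv_mul_cancel_right, mul_center_mul hg₀]

end Generators

include hst2 hg₀st in
theorem isSAIPLoop : IsSAIPLoop (CheinDouble Q st g₀) := by
  have hD := isFlexIPLoop hQ.isFlexIPLoop hg₀ hanti hst2 hg₀st hN
  refine hD.isSAIPLoop fun θ => hD.isSemiautomorphism_of_isInnerMapping ?_
  rintro π (⟨X, hπ⟩ | ⟨X, hπ⟩) B
  · obtain rfl : π = hD.leftMul X := Equiv.ext hπ
    induction X <;> induction B
    · exact isSemiautomorphism_innerAt_leftMul_inQ_inQ hQ hg₀ hanti hN hD _ _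
    · exact isSemiautomorphism_innerAt_leftMul_inQ_inQt hQ hg₀ hanti hst2 hN hD _ _
    · exact isSemiautomorphism_innerAt_leftMul_inQt_inQ hQ hg₀ hanti hst2 hN hD _ _
    · exact isSemiautomorphism_innerAt_leftMul_inQt_inQt hQ hg₀ hanti hst2 hg₀st hN hD _ _
  · obtain rfl : π = hD.rightMul X := Equiv.ext hπ
    induction X <;> induction B
    · exact isSemiautomorphism_innerAt_rightMul_inQ_inQ hQ hg₀ hanti hst2 hN hD _ _
    · exact isSemiautomorphism_innerAt_rightMul_inQ_inQt hQ hg₀ hanti hst2 hN hD _ _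
    · exact isSemiautomorphism_innerAt_rightMul_inQt_inQ hQ hg₀ hanti hst2 hg₀st hN hD _ _
    · exact isSemiautomorphism_innerAt_rightMul_inQt_inQt hQ hg₀ hanti hst2 hg₀st hN hD _ _

end CheinDouble

/-- The Chein-type doubling of a semiautomorphic IP loop with respect to
an involutory antiautomorphism `*` with `g₀* = g₀` and `gg* ∈ Z(Q)` is a
semiautomorphic IP loop. -/
theorem stmt14 (Q : Type*) [Mul Q] [One Q] [Inv Q] (hQ : IsSAIPLoop Q)
    (g₀ : Q) (hg₀ : g₀ ∈ loopCenter Q)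
    (st : Q → Q) (hanti : ∀ g h : Q, st (g * h) = st h * st g)
    (hst2 : ∀ g : Q, st (st g) = g) (hg₀st : st g₀ = g₀)
    (hZ : ∀ g : Q, g * st g ∈ loopCenter Q)
    (f : Q ⊕ Q → Q ⊕ Q → Q ⊕ Q)
    (hf : ∀ g h : Q,
      f (.inl g) (.inl h) = .inl (g * h) ∧
      f (.inl g) (.inr h) = .inr (h * g) ∧
      f (.inr g) (.inl h) = .inr (g * st h) ∧
      f (.inr g) (.inr h) = .inl (g₀ * (st h * g))) :
    ∃ inv : Q ⊕ Q → Q ⊕ Q,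
      @IsSAIPLoop (Q ⊕ Q) ⟨f⟩ ⟨Sum.inl 1⟩ ⟨inv⟩ := by
  obtain rfl : f = CheinDouble.mul st g₀ := by
    funext X Y
    rcases X with g | g <;> rcases Y with k | k
    exacts [(hf g k).1, (hf g k).2.1, (hf g k).2.2.1, (hf g k).2.2.2]
  exact ⟨CheinDouble.inv st g₀, CheinDouble.isSAIPLoop hQ hg₀ hanti hst2 hg₀st hZ⟩
end

section
/- Let Q be a semiautomorphic IP loop, g₀ ∈ Z(Q), and * an involutory antiautomorphism of Q such that g₀* = g₀ and gg* ∈ Z(Q) for every g ∈ Q. Form the doubled loop (Q ∪ Qt, ∘) using either the Chein-type multiplication (g∘h = gh, g∘(ht) = (hg)t, (gt)∘h = (gh*)t, (gt)∘(ht) = g₀h*g) or the de Barros–Juriaans-type multiplication (g∘h = gh, g∘(ht) = (gh)t, (gt)∘h = (h*g)t, (gt)∘(ht) = g₀gh*). Then g₀ lies in the center Z(Q ∪ Qt) of the doubled loop. -/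
/-!
In both doublings (`Sum.inr g` encodes `gt`, `st` the antiautomorphism `*`) multiplying by `g₀`
on either side multiplies the `Q`-coordinate by `g₀`, because `g₀` is central in `Q` and
`g₀* = g₀`. Since `(g₀h)* = h*g₀`, centrality of `g₀` in `Q` also lets this scaling be pulled out
of either factor of any product of the doubled loop, and an element whose left and right
translations agree with such a map is central.
-/

section Center

variable {M : Type*} [Mul M] {c : M}

theorem mul_comm_of_mem_loopCenter (hc : c ∈ loopCenter M) (x : M) : x * c = c * x :=
  (hc.1 x).symm

theorem mul_assoc_of_mem_loopCenter (hc : c ∈ loopCenter M) (x y : M) :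
    c * x * y = c * (x * y) :=
  (hc.2.1 x y).symm

theorem mul_left_comm_of_mem_loopCenter (hc : c ∈ loopCenter M) (x y : M) :
    x * (c * y) = c * (x * y) := by
  rw [hc.2.2.1, mul_comm_of_mem_loopCenter hc, mul_assoc_of_mem_loopCenter hc]

theorem mem_loopCenter_of_mul_eq (σ : M → M) (hl : ∀ u, c * u = σ u) (hr : ∀ u, u * c = σ u)
    (hσl : ∀ u v, σ u * v = σ (u * v)) (hσr : ∀ u v, u * σ v = σ (u * v)) :
    c ∈ loopCenter M := by
  refine ⟨fun u => ?_, fun u v => ?_, fun u v => ?_, fun u v => ?_⟩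
  · rw [hl, hr]
  · rw [hl, hl, hσl]
  · rw [hl, hr, hσl, hσr]
  · rw [hr, hr, hσr]

end Center

section Doubling

variable {Q : Type*} [Mul Q]

def cheinMul (g₀ : Q) (st : Q → Q) : Q ⊕ Q → Q ⊕ Q → Q ⊕ Q
  | .inl g, .inl h => .inl (g * h)
  | .inl g, .inr h => .inr (h * g)
  | .inr g, .inl h => .inr (g * st h)
  | .inr g, .inr h => .inl (g₀ * (st h * g))

def deBarrosJuriaansMul (g₀ : Q) (st : Q → Q) : Q ⊕ Q → Q ⊕ Q → Q ⊕ Q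
  | .inl g, .inl h => .inl (g * h)
  | .inl g, .inr h => .inr (g * h)
  | .inr g, .inl h => .inr (st h * g)
  | .inr g, .inr h => .inl (g₀ * (g * st h))

variable {g₀ : Q} {st : Q → Q}

theorem inl_mem_loopCenter_cheinMul (hg₀ : g₀ ∈ loopCenter Q)
    (hanti : ∀ g h : Q, st (g * h) = st h * st g) (hg₀st : st g₀ = g₀) :
    Sum.inl g₀ ∈ @loopCenter (Q ⊕ Q) ⟨cheinMul g₀ st⟩ := by
  let _ : Mul (Q ⊕ Q) := ⟨cheinMul g₀ st⟩
  have hmul (u v : Q ⊕ Q) : u * v = cheinMul g₀ st u v := rfl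
  refine mem_loopCenter_of_mul_eq (Sum.map (g₀ * ·) (g₀ * ·)) ?_ ?_ ?_ ?_ <;>
    [rintro (g | g); rintro (g | g); rintro (g | g) (h | h); rintro (g | g) (h | h)] <;>
    simp [hmul, cheinMul, hanti, hg₀st, mul_comm_of_mem_loopCenter hg₀,
      mul_assoc_of_mem_loopCenter hg₀, mul_left_comm_of_mem_loopCenter hg₀]

theorem inl_mem_loopCenter_deBarrosJuriaansMul (hg₀ : g₀ ∈ loopCenter Q)
    (hanti : ∀ g h : Q, st (g * h) = st h * st g) (hg₀st : st g₀ = g₀) :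
    Sum.inl g₀ ∈ @loopCenter (Q ⊕ Q) ⟨deBarrosJuriaansMul g₀ st⟩ := by
  let _ : Mul (Q ⊕ Q) := ⟨deBarrosJuriaansMul g₀ st⟩
  have hmul (u v : Q ⊕ Q) : u * v = deBarrosJuriaansMul g₀ st u v := rfl
  refine mem_loopCenter_of_mul_eq (Sum.map (g₀ * ·) (g₀ * ·)) ?_ ?_ ?_ ?_ <;>
    [rintro (g | g); rintro (g | g); rintro (g | g) (h | h); rintro (g | g) (h | h)] <;>
    simp [hmul, deBarrosJuriaansMul, hanti, hg₀st, mul_comm_of_mem_loopCenter hg₀,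
      mul_assoc_of_mem_loopCenter hg₀, mul_left_comm_of_mem_loopCenter hg₀]

end Doubling

theorem stmt17_general (Q : Type*) [Mul Q] (g₀ : Q) (hg₀ : g₀ ∈ loopCenter Q)
    (st : Q → Q) (hanti : ∀ g h : Q, st (g * h) = st h * st g)
    (hg₀st : st g₀ = g₀)
    (mulC mulD : Q ⊕ Q → Q ⊕ Q → Q ⊕ Q)
    (hC : ∀ g h : Q,
      mulC (.inl g) (.inl h) = .inl (g * h) ∧
      mulC (.inl g) (.inr h) = .inr (h * g) ∧
      mulC (.inr g) (.inl h) = .inr (g * st h) ∧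
      mulC (.inr g) (.inr h) = .inl (g₀ * (st h * g)))
    (hD : ∀ g h : Q,
      mulD (.inl g) (.inl h) = .inl (g * h) ∧
      mulD (.inl g) (.inr h) = .inr (g * h) ∧
      mulD (.inr g) (.inl h) = .inr (st h * g) ∧
      mulD (.inr g) (.inr h) = .inl (g₀ * (g * st h))) :
    Sum.inl g₀ ∈ @loopCenter (Q ⊕ Q) ⟨mulC⟩ ∧
    Sum.inl g₀ ∈ @loopCenter (Q ⊕ Q) ⟨mulD⟩ := by
  obtain rfl : mulC = cheinMul g₀ st := funext₂ fun u v => by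
    cases u <;> cases v <;> simp [cheinMul, hC]
  obtain rfl : mulD = deBarrosJuriaansMul g₀ st := funext₂ fun u v => by
    cases u <;> cases v <;> simp [deBarrosJuriaansMul, hD]
  exact ⟨inl_mem_loopCenter_cheinMul hg₀ hanti hg₀st,
    inl_mem_loopCenter_deBarrosJuriaansMul hg₀ hanti hg₀st⟩

/-- In either doubled loop (Chein-type or de Barros–Juriaans-type),
`g₀` lies in the center of the doubled loop. -/
theorem stmt17 (Q : Type*) [Mul Q] [One Q] [Inv Q] (hQ : IsSAIPLoop Q)
    (g₀ : Q) (hg₀ : g₀ ∈ loopCenter Q)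
    (st : Q → Q) (hanti : ∀ g h : Q, st (g * h) = st h * st g)
    (hst2 : ∀ g : Q, st (st g) = g) (hg₀st : st g₀ = g₀)
    (hZ : ∀ g : Q, g * st g ∈ loopCenter Q)
    (mulC mulD : Q ⊕ Q → Q ⊕ Q → Q ⊕ Q)
    (hC : ∀ g h : Q,
      mulC (.inl g) (.inl h) = .inl (g * h) ∧
      mulC (.inl g) (.inr h) = .inr (h * g) ∧
      mulC (.inr g) (.inl h) = .inr (g * st h) ∧
      mulC (.inr g) (.inr h) = .inl (g₀ * (st h * g)))
    (hD : ∀ g h : Q,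
      mulD (.inl g) (.inl h) = .inl (g * h) ∧
      mulD (.inl g) (.inr h) = .inr (g * h) ∧
      mulD (.inr g) (.inl h) = .inr (st h * g) ∧
      mulD (.inr g) (.inr h) = .inl (g₀ * (g * st h))) :
    Sum.inl g₀ ∈ @loopCenter (Q ⊕ Q) ⟨mulC⟩ ∧
    Sum.inl g₀ ∈ @loopCenter (Q ⊕ Q) ⟨mulD⟩ :=
  stmt17_general Q g₀ hg₀ st hanti hg₀st mulC mulD hC hD
end
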